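/- arXiv:2309.01920 — 4 statements merged into one kernel-verified Lean document; each statement's English description precedes it below -/
import Mathlib

section
/- Let $F>0$, $0\le\alpha\le 1$, and for integers $1\le g\le r$ define $F_r^g = (\frac{1}{1+\alpha})^{r-1}\alpha^g F$ for $g<r$ and $F_r^r = (\frac{1}{1+\alpha})^{r-1}F$. Then for all $r\ge 1$ and $1\le g\le r$, the pairwise Sybil-proofness condition $F_r^g \ge F_{r+1}^g + F_{r+1}^{g+1}$ holds. -/
/-- Reward of the node at position `g` on a relay path of length `r`:
`(1/(1+α))^(r-1) * α^g * F` for `g < r`, and `(1/(1+α))^(r-1) * F` for `g = r`. -/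
noncomputable def relayReward (F α : ℝ) (r g : ℕ) : ℝ :=
  if g < r then (1 / (1 + α)) ^ (r - 1) * α ^ g * F
  else (1 / (1 + α)) ^ (r - 1) * F

/-!
With `c = 1/(1+α)`, lengthening the path by one multiplies every reward by `c`. For an
intermediate relay `g < r` the two split rewards are `c^r α^g F (1 + α) = F_r^g`, an equality.
For the full node `g = r` they are `c^r (α^r + 1) F`, at most `c^r (α + 1) F = F_r^r` because
`α^r ≤ α` for `0 ≤ α ≤ 1` and `r ≥ 1`.
-/

section

variable {F α : ℝ} {r g : ℕ}

lemma relayReward_of_lt (h : g < r) :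
    relayReward F α r g = (1 / (1 + α)) ^ (r - 1) * α ^ g * F :=
  if_pos h

lemma relayReward_self : relayReward F α r r = (1 / (1 + α)) ^ (r - 1) * F :=
  if_neg (lt_irrefl r)

lemma one_div_pow_pred_eq_mul {a : ℝ} (ha : a ≠ 0) (hr : 1 ≤ r) :
    (1 / a) ^ (r - 1) = (1 / a) ^ r * a := by
  obtain ⟨k, rfl⟩ := Nat.exists_eq_add_of_le' hr
  rw [Nat.add_sub_cancel, pow_succ, mul_assoc, one_div_mul_cancel ha, mul_one]

lemma relayReward_succ_add_succ_of_lt (hα : 1 + α ≠ 0) (hg : g < r) :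
    relayReward F α (r + 1) g + relayReward F α (r + 1) (g + 1) = relayReward F α r g := by
  rw [relayReward_of_lt (by omega), relayReward_of_lt (by omega), relayReward_of_lt hg,
    Nat.add_sub_cancel, one_div_pow_pred_eq_mul hα (by omega)]
  ring

lemma relayReward_succ_add_succ_self_le (hF : 0 ≤ F) (hα0 : 0 ≤ α) (hα1 : α ≤ 1)
    (hr : 1 ≤ r) :
    relayReward F α (r + 1) r + relayReward F α (r + 1) (r + 1) ≤ relayReward F α r r := by
  rw [relayReward_of_lt (by omega : r < r + 1), relayReward_self, relayReward_self,
    Nat.add_sub_cancel, one_div_pow_pred_eq_mul (by positivity) hr]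
  have hpow : α ^ r ≤ α := pow_le_of_le_one hα0 hα1 (by omega)
  have hscale : 0 ≤ (1 / (1 + α)) ^ r * F := by positivity
  linarith [mul_le_mul_of_nonneg_left hpow hscale]

end

theorem stmt0 (F α : ℝ) (hF : 0 < F) (hα0 : 0 ≤ α) (hα1 : α ≤ 1) :
    ∀ r g : ℕ, 1 ≤ r → 1 ≤ g → g ≤ r →
      relayReward F α (r + 1) g + relayReward F α (r + 1) (g + 1)
        ≤ relayReward F α r g := by
  intro r g hr _ hgr
  rcases hgr.lt_or_eq with hlt | rfl
  · exact (relayReward_succ_add_succ_of_lt (by positivity) hlt).le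
  · exact relayReward_succ_add_succ_self_le hF.le hα0 hα1 hr
end

section
/- Suppose a family of nonnegative rewards $F_r^g$ (for $1\le g\le r$) satisfies (i) $F_r^g \ge F_{r+1}^g$ for all $r,g$, and (ii) $F_r^g \ge F_{r+1}^g + F_{r+1}^{g+1}$ for all $r,g$. Then for every $u\ge 1$: $F_r^g \ge F_{r+u}^g + F_{r+u}^{g+1} + \cdots + F_{r+u}^{g+u}$. -/
/-! Induction on `u`: in the `(u + 1)`-step sum, the first term `F (r + u + 1) g` is at most
`F (r + 1) g` by (i), and the remaining `u + 1` terms form the `u`-step sum starting at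
`(r + 1, g + 1)`, hence are at most `F (r + 1) (g + 1)`; condition (ii) closes the step. -/

open Finset

variable {M : Type*} [AddCommMonoid M] [PartialOrder M] [IsOrderedAddMonoid M]

theorem sum_range_le_of_succ_add_succ_le (F : ℕ → ℕ → M)
    (hmono : ∀ r g : ℕ, F (r + 1) g ≤ F r g)
    (hstep : ∀ r g : ℕ, F (r + 1) g + F (r + 1) (g + 1) ≤ F r g) (u r g : ℕ) :
    ∑ k ∈ range (u + 1), F (r + u) (g + k) ≤ F r g := by
  induction u generalizing r g with
  | zero => simp
  | succ u ih =>
    have hfirst : F (r + 1 + u) g ≤ F (r + 1) g :=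
      antitone_nat_of_succ_le (f := (F · g)) (fun r => hmono r g) (Nat.le_add_right _ _)
    have hrest := ih (r + 1) (g + 1)
    calc ∑ k ∈ range (u + 1 + 1), F (r + (u + 1)) (g + k)
        = ∑ k ∈ range (u + 1), F (r + 1 + u) (g + 1 + k) + F (r + 1 + u) g := by
          rw [sum_range_succ']
          simp only [add_assoc, add_comm 1, add_zero]
      _ ≤ F (r + 1) (g + 1) + F (r + 1) g := add_le_add hrest hfirst
      _ ≤ F r g := by rw [add_comm]; exact hstep r g

theorem stmt1_general (F : ℕ → ℕ → ℝ)
    (hmono : ∀ r g : ℕ, F (r + 1) g ≤ F r g)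
    (hstep : ∀ r g : ℕ, F (r + 1) g + F (r + 1) (g + 1) ≤ F r g) :
    ∀ r g u : ℕ, 1 ≤ u →
      ∑ k ∈ Finset.range (u + 1), F (r + u) (g + k) ≤ F r g :=
  fun r g u _ => sum_range_le_of_succ_add_succ_le F hmono hstep u r g

theorem stmt1 (F : ℕ → ℕ → ℝ)
    (hnn : ∀ r g : ℕ, 1 ≤ g → g ≤ r → 0 ≤ F r g)
    (hmono : ∀ r g : ℕ, F (r + 1) g ≤ F r g)
    (hstep : ∀ r g : ℕ, F (r + 1) g + F (r + 1) (g + 1) ≤ F r g) :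
    ∀ r g u : ℕ, 1 ≤ u →
      ∑ k ∈ Finset.range (u + 1), F (r + u) (g + k) ≤ F r g :=
  stmt1_general F hmono hstep
end

section
/- Let $F>0$, $0\le\alpha\le 1$, $r\ge 1$. Define the honest full-node reward $R_v = (\frac{1}{1+\alpha})^{r-1}F$ and the Sybil-attack reward $R_v' = (\frac{1}{1+\alpha})^r F + (\frac{1}{1+\alpha})^r \alpha^r F$. Then $R_v - R_v' = \frac{\alpha-\alpha^r}{1+\alpha}\,(\frac{1}{1+\alpha})^{r-1} F \ge 0$. -/
theorem honest_reward_sub_sybil_reward {K : Type*} [Field K] (F α : K) (hα : 1 + α ≠ 0)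
    {r : ℕ} (hr : 1 ≤ r) :
    ((1 / (1 + α)) ^ (r - 1) * F)
        - ((1 / (1 + α)) ^ r * F + (1 / (1 + α)) ^ r * α ^ r * F)
      = (α - α ^ r) / (1 + α) * (1 / (1 + α)) ^ (r - 1) * F := by
  obtain ⟨k, rfl⟩ := Nat.exists_eq_add_of_le' hr
  rw [Nat.add_sub_cancel, pow_succ]
  field_simp
  ring

theorem stmt2 (F α : ℝ) (hF : 0 < F) (hα0 : 0 ≤ α) (hα1 : α ≤ 1)
    (r : ℕ) (hr : 1 ≤ r) :
    ((1 / (1 + α)) ^ (r - 1) * F)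
        - ((1 / (1 + α)) ^ r * F + (1 / (1 + α)) ^ r * α ^ r * F)
      = (α - α ^ r) / (1 + α) * (1 / (1 + α)) ^ (r - 1) * F ∧
    0 ≤ (α - α ^ r) / (1 + α) * (1 / (1 + α)) ^ (r - 1) * F := by
  have hα : 0 < 1 + α := by linarith
  refine ⟨honest_reward_sub_sybil_reward F α hα.ne' hr, ?_⟩
  have hpow : α ^ r ≤ α := pow_le_of_le_one hα0 hα1 (by omega)
  have hgain : 0 ≤ (α - α ^ r) / (1 + α) := div_nonneg (sub_nonneg.2 hpow) hα.le
  positivity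
end

section
/- Let $F>0$, $0\le\alpha\le 1$, and $1\le g < r$. Define the honest light-node reward $R_f = (\frac{1}{1+\alpha})^{r-1}\alpha^g F$ and the Sybil-attack reward $R_f' = (\frac{1}{1+\alpha})^r \alpha^g F + (\frac{1}{1+\alpha})^r \alpha^{g+1} F$. Then $R_f = R_f'$. -/
/- The two forged shares add up to `xⁿ⁺¹ (1 + α) αᵍ c` with `x = 1 / (1 + α)`, and `x (1 + α) = 1`. -/
theorem one_div_one_add_pow_mul_eq_add {K : Type*} [Field K] (α c : K) (hα : 1 + α ≠ 0)
    (n g : ℕ) :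
    (1 / (1 + α)) ^ n * α ^ g * c
      = (1 / (1 + α)) ^ (n + 1) * α ^ g * c + (1 / (1 + α)) ^ (n + 1) * α ^ (g + 1) * c := by
  rw [pow_succ, pow_succ]
  field_simp

theorem stmt3_general (F α : ℝ) (hα0 : 0 ≤ α)
    (g r : ℕ) (hgr : g < r) :
    (1 / (1 + α)) ^ (r - 1) * α ^ g * F
      = (1 / (1 + α)) ^ r * α ^ g * F + (1 / (1 + α)) ^ r * α ^ (g + 1) * F := by
  obtain ⟨n, rfl⟩ : ∃ n, r = n + 1 := Nat.exists_eq_add_one.mpr (by omega)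
  simpa using one_div_one_add_pow_mul_eq_add α F (by positivity) n g

theorem stmt3 (F α : ℝ) (hF : 0 < F) (hα0 : 0 ≤ α) (hα1 : α ≤ 1)
    (g r : ℕ) (hg : 1 ≤ g) (hgr : g < r) :
    (1 / (1 + α)) ^ (r - 1) * α ^ g * F
      = (1 / (1 + α)) ^ r * α ^ g * F + (1 / (1 + α)) ^ r * α ^ (g + 1) * F :=
  stmt3_general F α hα0 g r hgr
end
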